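/- arXiv:1701.07185 — 6 statements merged into one kernel-verified Lean document; each statement's English description precedes it below -/
import Mathlib

section
/- If an ordered semigroup S is a nil extension of a group like ordered semigroup G (an ideal of S), then for all a, b ∈ S there exist n ∈ ℕ and x ∈ S such that a^n ≤ b^n · x · b^n. -/
/-!
Choose `n` so large that `a^n` and `b^n` both lie in `G`; powers cannot leave `G` once there,
since `G` is a right ideal. Group likeness then gives `a^n ≤ b^n y` and `y ≤ x b^n` for some
`x, y ∈ G`.
-/

/-- `spow a n` is the semigroup power `a^(n+1)` (exponents in a semigroup are ≥ 1). -/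
def spow {S : Type*} [Semigroup S] (a : S) : ℕ → S
  | 0 => a
  | n + 1 => spow a n * a

/-- ordered-regular elements: `a ≤ a * x * a` for some `x`. -/
def RegLe (S : Type*) [Semigroup S] [PartialOrder S] : Set S :=
  {a | ∃ x : S, a ≤ a * x * a}

/-- `I` is an ideal of the ordered semigroup `S`. -/
def IsIdeal {S : Type*} [Semigroup S] [PartialOrder S] (I : Set S) : Prop :=
  I.Nonempty ∧ (∀ s : S, ∀ a ∈ I, s * a ∈ I) ∧ (∀ a ∈ I, ∀ s : S, a * s ∈ I) ∧
    (∀ t : S, ∀ a ∈ I, t ≤ a → t ∈ I)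

/-- `K` is left group like: for all `u v ∈ K` there is `x ∈ K` with `u ≤ x * v`. -/
def LeftGroupLike {S : Type*} [Semigroup S] [PartialOrder S] (K : Set S) : Prop :=
  ∀ u ∈ K, ∀ v ∈ K, ∃ x ∈ K, u ≤ x * v

/-- `K` is group like. -/
def OrdGroupLike {S : Type*} [Semigroup S] [PartialOrder S] (K : Set S) : Prop :=
  ∀ u ∈ K, ∀ v ∈ K, (∃ x ∈ K, u ≤ x * v) ∧ (∃ y ∈ K, u ≤ v * y)

/-- `K` is a regular ordered subsemigroup. -/
def RegularOn {S : Type*} [Semigroup S] [PartialOrder S] (K : Set S) : Prop :=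
  ∀ u ∈ K, ∃ x ∈ K, u ≤ u * x * u

/-- `K` is a Clifford ordered semigroup: regular and `uv ∈ (vKu]`. -/
def CliffordOn {S : Type*} [Semigroup S] [PartialOrder S] (K : Set S) : Prop :=
  RegularOn K ∧ ∀ u ∈ K, ∀ v ∈ K, ∃ w ∈ K, u * v ≤ v * w * u

/-- `K` is a left Clifford ordered semigroup: regular and `uv ∈ (Ku]`. -/
def LeftCliffordOn {S : Type*} [Semigroup S] [PartialOrder S] (K : Set S) : Prop :=
  RegularOn K ∧ ∀ u ∈ K, ∀ v ∈ K, ∃ w ∈ K, u * v ≤ w * u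

/-- `S` is a nil extension of the ideal `K`: every element has a power in `K`. -/
def NilExtOf {S : Type*} [Semigroup S] [PartialOrder S] (K : Set S) : Prop :=
  IsIdeal K ∧ ∀ a : S, ∃ n : ℕ, spow a n ∈ K

section

variable {S : Type*} [Semigroup S]

theorem spow_mem_of_le {K : Set S} (hK : ∀ a ∈ K, ∀ s : S, a * s ∈ K) {a : S} {m n : ℕ}
    (hm : spow a m ∈ K) (hmn : m ≤ n) : spow a n ∈ K := by
  induction n, hmn using Nat.le_induction with
  | base => exact hm
  | succ n _ ih => exact hK _ ih a

theorem OrdGroupLike.exists_le_mul_mul [PartialOrder S] [MulLeftMono S] {K : Set S}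
    (hK : OrdGroupLike K) {u v : S} (hu : u ∈ K) (hv : v ∈ K) : ∃ x ∈ K, u ≤ v * x * v := by
  obtain ⟨y, hy, huy⟩ := (hK u hu v hv).2
  obtain ⟨x, hx, hyx⟩ := (hK y hy v hv).1
  refine ⟨x, hx, ?_⟩
  calc u ≤ v * y := huy
    _ ≤ v * (x * v) := mul_le_mul_right hyx v
    _ = v * x * v := (mul_assoc v x v).symm

end

variable {S : Type*} [Semigroup S] [PartialOrder S]
  [CovariantClass S S (· * ·) (· ≤ ·)]
  [CovariantClass S S (Function.swap (· * ·)) (· ≤ ·)]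

theorem stmt4 (G : Set S) (hI : IsIdeal G) (hG : OrdGroupLike G)
    (hnil : ∀ a : S, ∃ m : ℕ, spow a m ∈ G) :
    ∀ a b : S, ∃ n : ℕ, ∃ x : S, spow a n ≤ spow b n * x * spow b n := by
  intro a b
  obtain ⟨m, ham⟩ := hnil a
  obtain ⟨k, hbk⟩ := hnil b
  have hG_right : ∀ u ∈ G, ∀ s : S, u * s ∈ G := hI.2.2.1
  obtain ⟨x, -, hx⟩ := hG.exists_le_mul_mul (spow_mem_of_le hG_right ham (le_max_left m k))
    (spow_mem_of_le hG_right hbk (le_max_right m k))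
  exact ⟨max m k, x, hx⟩
end

section
/- Suppose the ordered semigroup S satisfies: for all a, b ∈ S there exists n ∈ ℕ with a^n ∈ (b^n S b^n]. Then the set T = Reg≤(S) is a group like ordered semigroup: for all a, b ∈ T there exist u, v ∈ T with a ≤ bu and a ≤ vb. -/
/-- `K` is group like. -/
def GroupLike' {S : Type*} [Semigroup S] [PartialOrder S] (K : Set S) : Prop :=
  ∀ u ∈ K, ∀ v ∈ K, (∃ x ∈ K, u ≤ x * v) ∧ (∃ y ∈ K, u ≤ v * y)

variable {S : Type*} [Semigroup S] [PartialOrder S]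
  [CovariantClass S S (· * ·) (· ≤ ·)]
  [CovariantClass S S (Function.swap (· * ·)) (· ≤ ·)]

theorem mul_spow_comm {M : Type*} [Semigroup M] (a : M) : ∀ n, a * spow a n = spow a n * a
  | 0 => rfl
  | n + 1 => by
    change a * (spow a n * a) = spow a n * a * a
    rw [← mul_assoc, mul_spow_comm a n]

theorem spow_succ' {M : Type*} [Semigroup M] (a : M) (n : ℕ) : spow a (n + 1) = a * spow a n :=
  (mul_spow_comm a n).symm

theorem exists_spow_mul_spow_eq_mul_left {M : Type*} [Semigroup M] (b y : M) (n : ℕ) :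
    ∃ c, spow b n * y * spow b n = b * c := by
  cases n with
  | zero => exact ⟨y * b, by simp only [spow, mul_assoc]⟩
  | succ k => exact ⟨spow b k * y * (b * spow b k), by rw [spow_succ']; simp only [mul_assoc]⟩

theorem exists_spow_mul_spow_eq_mul_right {M : Type*} [Semigroup M] (b y : M) (n : ℕ) :
    ∃ c, spow b n * y * spow b n = c * b := by
  cases n with
  | zero => exact ⟨b * y, rfl⟩
  | succ k => exact ⟨spow b (k + 1) * y * spow b k, by rw [spow]; simp only [mul_assoc]⟩

theorem le_spow_mul_mul_of_le {M : Type*} [Semigroup M] [Preorder M] [MulLeftMono M] {a x : M}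
    (hx : a ≤ a * x * a) : ∀ n, a ≤ spow (a * x) n * a
  | 0 => hx
  | n + 1 => calc
      a ≤ a * x * a := hx
      _ ≤ a * x * (spow (a * x) n * a) := by gcongr; exact le_spow_mul_mul_of_le hx n
      _ = spow (a * x) (n + 1) * a := by rw [spow_succ']; simp only [mul_assoc]

theorem le_mul_spow_mul_of_le {M : Type*} [Semigroup M] [Preorder M] [MulRightMono M] {a x : M}
    (hx : a ≤ a * x * a) : ∀ n, a ≤ a * spow (x * a) n
  | 0 => by rw [spow, ← mul_assoc]; exact hx
  | n + 1 => calc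
      a ≤ a * x * a := hx
      _ ≤ a * spow (x * a) n * x * a := by gcongr; exact le_mul_spow_mul_of_le hx n
      _ = a * spow (x * a) (n + 1) := by rw [spow]; simp only [mul_assoc]

def PowersDominated (M : Type*) [Semigroup M] [Preorder M] : Prop :=
  ∀ a b : M, ∃ n : ℕ, ∃ x : M, spow a n ≤ spow b n * x * spow b n

theorem RegLe.mul_mem_left (h : PowersDominated S) (s : S) {a : S} (ha : a ∈ RegLe S) :
    s * a ∈ RegLe S := by
  obtain ⟨x, hx⟩ := ha
  obtain ⟨n, y, hy⟩ := h (x * a) (s * a)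
  obtain ⟨c, hc⟩ := exists_spow_mul_spow_eq_mul_right (s * a) y n
  refine ⟨c, ?_⟩
  calc s * a ≤ s * (a * spow (x * a) n) := by gcongr; exact le_mul_spow_mul_of_le hx n
    _ ≤ s * a * (spow (s * a) n * y * spow (s * a) n) := by rw [← mul_assoc]; gcongr
    _ = s * a * c * (s * a) := by rw [hc]; simp only [mul_assoc]

theorem RegLe.mul_mem_right (h : PowersDominated S) {a : S} (ha : a ∈ RegLe S) (s : S) :
    a * s ∈ RegLe S := by
  obtain ⟨x, hx⟩ := ha
  obtain ⟨n, y, hy⟩ := h (a * x) (a * s)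
  obtain ⟨c, hc⟩ := exists_spow_mul_spow_eq_mul_left (a * s) y n
  refine ⟨c, ?_⟩
  calc a * s ≤ spow (a * x) n * a * s := by gcongr; exact le_spow_mul_mul_of_le hx n
    _ ≤ spow (a * s) n * y * spow (a * s) n * (a * s) := by rw [mul_assoc]; gcongr
    _ = a * s * c * (a * s) := by rw [hc]

theorem RegLe.exists_le_mul_left (h : PowersDominated S) {a : S} (ha : a ∈ RegLe S) (b : S) :
    ∃ u ∈ RegLe S, a ≤ b * u := by
  obtain ⟨x, hx⟩ := ha
  obtain ⟨n, y, hy⟩ := h (a * x) b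
  obtain ⟨c, hc⟩ := exists_spow_mul_spow_eq_mul_left b y n
  refine ⟨c * a, RegLe.mul_mem_left h c ⟨x, hx⟩, ?_⟩
  calc a ≤ spow (a * x) n * a := le_spow_mul_mul_of_le hx n
    _ ≤ spow b n * y * spow b n * a := by gcongr
    _ = b * (c * a) := by rw [hc, mul_assoc]

theorem RegLe.exists_le_mul_right (h : PowersDominated S) {a : S} (ha : a ∈ RegLe S) (b : S) :
    ∃ v ∈ RegLe S, a ≤ v * b := by
  obtain ⟨x, hx⟩ := ha
  obtain ⟨n, y, hy⟩ := h (x * a) b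
  obtain ⟨c, hc⟩ := exists_spow_mul_spow_eq_mul_right b y n
  refine ⟨a * c, RegLe.mul_mem_right h ⟨x, hx⟩ c, ?_⟩
  calc a ≤ a * spow (x * a) n := le_mul_spow_mul_of_le hx n
    _ ≤ a * (spow b n * y * spow b n) := by gcongr
    _ = a * c * b := by rw [hc, mul_assoc]

theorem stmt7
    (h : ∀ a b : S, ∃ n : ℕ, ∃ x : S, spow a n ≤ spow b n * x * spow b n) :
    ∀ a ∈ RegLe S, ∀ b ∈ RegLe S,
      (∃ u ∈ RegLe S, a ≤ b * u) ∧ (∃ v ∈ RegLe S, a ≤ v * b) :=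
  fun _ ha b _ => ⟨RegLe.exists_le_mul_left h ha b, RegLe.exists_le_mul_right h ha b⟩
end

section
/- If an ordered semigroup S is a nil extension of a Clifford ordered semigroup K, then for all x, a, y ∈ S there exist n ∈ ℕ and s, t ∈ S such that x a^n y ≤ x a^n y · s · y a^n x and x a^n y ≤ y a^n x · t · x a^n y. -/
/-- `K` is group like. -/
def GroupLikeOn {S : Type*} [Semigroup S] [PartialOrder S] (K : Set S) : Prop :=
  ∀ u ∈ K, ∀ v ∈ K, (∃ x ∈ K, u ≤ x * v) ∧ (∃ y ∈ K, u ≤ v * y)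

/-!
Put `g = a^m ∈ K`, `u = x g y` and `v = y g x`. In a Clifford ideal `K` every `c ∈ K` satisfies
`S c ⊆ (c S]` and `c S ⊆ (S c]`, so two elements of `K` can be swapped at the cost of a factor
on the right: `α β ≤ β α r`. Regularity gives `u ≤ u³ r`, and two swaps turn
`u³ = (x g y)(x g)(y x g y)` into `(x y x g)(y g x)(…)`, so `u ∈ (S v S]`. For `u, c ∈ K`,
`u ∈ (S c S]` already forces `u ∈ (u S c]` and `u ∈ (c S u]`: write `u ≤ u z u` and move the
outer factors of `c` across `c`.
-/

namespace IsIdeal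

variable {S : Type*} [Semigroup S] [PartialOrder S] {K : Set S}

theorem mul_mem_left (hI : IsIdeal K) (s : S) {a : S} (ha : a ∈ K) : s * a ∈ K :=
  hI.2.1 s a ha

theorem mul_mem_right (hI : IsIdeal K) {a : S} (ha : a ∈ K) (s : S) : a * s ∈ K :=
  hI.2.2.1 a ha s

end IsIdeal

namespace CliffordOn

variable {S : Type*} [Semigroup S] [PartialOrder S] {K : Set S}

theorem exists_mul_le_mul_left [MulLeftMono S] (hI : IsIdeal K) (hC : CliffordOn K) {c : S}
    (hc : c ∈ K) (p : S) : ∃ r, p * c ≤ c * r := by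
  obtain ⟨z, hz, hcz⟩ := hC.1 c hc
  obtain ⟨w, -, hw⟩ := hC.2 (p * c * z) (hI.mul_mem_left _ hz) c hc
  refine ⟨w * (p * c * z), ?_⟩
  calc p * c ≤ p * (c * z * c) := by gcongr
    _ = p * c * z * c := by simp only [mul_assoc]
    _ ≤ c * w * (p * c * z) := hw
    _ = c * (w * (p * c * z)) := mul_assoc _ _ _

theorem exists_mul_le_mul_right [MulRightMono S] (hI : IsIdeal K) (hC : CliffordOn K) {c : S}
    (hc : c ∈ K) (q : S) : ∃ r, c * q ≤ r * c := by
  obtain ⟨z, hz, hcz⟩ := hC.1 c hc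
  obtain ⟨w, -, hw⟩ := hC.2 c hc (z * c * q) (hI.mul_mem_right (hI.mul_mem_right hz c) q)
  refine ⟨z * c * q * w, ?_⟩
  calc c * q ≤ c * z * c * q := by gcongr
    _ = c * (z * c * q) := by simp only [mul_assoc]
    _ ≤ z * c * q * w * c := hw

theorem exists_mul_le_mul_swap [MulLeftMono S] (hI : IsIdeal K) (hC : CliffordOn K) {α β : S}
    (hα : α ∈ K) (hβ : β ∈ K) : ∃ r, α * β ≤ β * α * r := by
  obtain ⟨w, -, hw⟩ := hC.2 α hα β hβ
  obtain ⟨r, hr⟩ := exists_mul_le_mul_left hI hC hα w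
  refine ⟨r, ?_⟩
  calc α * β ≤ β * w * α := hw
    _ = β * (w * α) := mul_assoc _ _ _
    _ ≤ β * (α * r) := by gcongr
    _ = β * α * r := (mul_assoc _ _ _).symm

theorem exists_le_mul_mul_mul [MulLeftMono S] [MulRightMono S] (hI : IsIdeal K)
    (hC : CliffordOn K) {u : S} (hu : u ∈ K) : ∃ r, u ≤ u * u * u * r := by
  obtain ⟨z, hz, huz⟩ := hC.1 u hu
  obtain ⟨r, hr⟩ := exists_mul_le_mul_left hI hC hu z
  have hsq : u ≤ u * u * r :=
    calc u ≤ u * z * u := huz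
      _ = u * (z * u) := mul_assoc _ _ _
      _ ≤ u * (u * r) := by gcongr
      _ = u * u * r := (mul_assoc _ _ _).symm
  refine ⟨r * r, ?_⟩
  calc u ≤ u * u * r := hsq
    _ ≤ u * (u * u * r) * r := by gcongr
    _ = u * u * u * (r * r) := by simp only [mul_assoc]

theorem exists_le_mul_reverse_mul [MulLeftMono S] [MulRightMono S] (hI : IsIdeal K)
    (hC : CliffordOn K) {g : S} (hg : g ∈ K) (x y : S) :
    ∃ p q, x * g * y ≤ p * (y * g * x) * q := by
  have hxg : x * g ∈ K := hI.mul_mem_left x hg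
  have hu : x * g * y ∈ K := hI.mul_mem_right hxg y
  obtain ⟨r₀, hr₀⟩ := exists_le_mul_mul_mul hI hC hu
  obtain ⟨r₁, hr₁⟩ := exists_mul_le_mul_swap hI hC hu hxg
  have hα : g * x * g * y * r₁ ∈ K :=
    hI.mul_mem_right (hI.mul_mem_right (hI.mul_mem_right (hI.mul_mem_right hg x) g) y) r₁
  have hβ : y * x * g * y ∈ K := by simpa only [mul_assoc] using hI.mul_mem_left y hu
  obtain ⟨r₂, hr₂⟩ := exists_mul_le_mul_swap hI hC hα hβ
  refine ⟨x * y * x * g, g * y * r₁ * r₂ * r₀, ?_⟩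
  calc x * g * y ≤ x * g * y * (x * g) * (y * x * g * y) * r₀ := by
        simpa only [mul_assoc] using hr₀
    _ ≤ x * g * (x * g * y) * r₁ * (y * x * g * y) * r₀ := by
        simpa only [mul_assoc] using mul_le_mul_left hr₁ ((y * x * g * y) * r₀)
    _ = x * (g * x * g * y * r₁ * (y * x * g * y)) * r₀ := by simp only [mul_assoc]
    _ ≤ x * (y * x * g * y * (g * x * g * y * r₁) * r₂) * r₀ := by gcongr
    _ = x * y * x * g * (y * g * x) * (g * y * r₁ * r₂ * r₀) := by simp only [mul_assoc]

theorem exists_le_mul_mul_of_le_mul_mul [MulLeftMono S] [MulRightMono S]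
    (hI : IsIdeal K) (hC : CliffordOn K) {u c p q : S}
    (hu : u ∈ K) (hc : c ∈ K) (h : u ≤ p * c * q) :
    (∃ s, u ≤ u * s * c) ∧ ∃ t, u ≤ c * t * u := by
  obtain ⟨z, -, huz⟩ := hC.1 u hu
  obtain ⟨r, hr⟩ := exists_mul_le_mul_right hI hC hc q
  obtain ⟨r', hr'⟩ := exists_mul_le_mul_left hI hC hc p
  constructor
  · refine ⟨z * p * r, ?_⟩
    calc u ≤ u * z * u := huz
      _ ≤ u * z * (p * c * q) := by gcongr
      _ = u * z * p * (c * q) := by simp only [mul_assoc]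
      _ ≤ u * z * p * (r * c) := by gcongr
      _ = u * (z * p * r) * c := by simp only [mul_assoc]
  · refine ⟨r' * q * z, ?_⟩
    calc u ≤ u * z * u := huz
      _ ≤ p * c * q * z * u := by gcongr
      _ ≤ c * r' * q * z * u := by gcongr
      _ = c * (r' * q * z) * u := by simp only [mul_assoc]

end CliffordOn

variable {S : Type*} [Semigroup S] [PartialOrder S]
  [CovariantClass S S (· * ·) (· ≤ ·)]
  [CovariantClass S S (Function.swap (· * ·)) (· ≤ ·)]

theorem stmt8 (K : Set S) (hI : IsIdeal K) (hC : CliffordOn K)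
    (hnil : ∀ a : S, ∃ m : ℕ, spow a m ∈ K) :
    ∀ x a y : S, ∃ n : ℕ, ∃ s t : S,
      x * spow a n * y ≤ x * spow a n * y * s * (y * spow a n * x) ∧
      x * spow a n * y ≤ y * spow a n * x * t * (x * spow a n * y) := by
  intro x a y
  obtain ⟨m, hm⟩ := hnil a
  have hu : x * spow a m * y ∈ K := hI.mul_mem_right (hI.mul_mem_left x hm) y
  have hv : y * spow a m * x ∈ K := hI.mul_mem_right (hI.mul_mem_left y hm) x
  obtain ⟨p, q, hpq⟩ := CliffordOn.exists_le_mul_reverse_mul hI hC hm x y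
  obtain ⟨⟨s, hs⟩, t, ht⟩ := CliffordOn.exists_le_mul_mul_of_le_mul_mul hI hC hu hv hpq
  exact ⟨m, s, t, hs, ht⟩
end

section
/- If an ordered semigroup S is a nil extension of a left Clifford ordered semigroup K, then for all x, a, y ∈ S there exist n ∈ ℕ and s, t ∈ S such that x a^n y ≤ x a^n y · s · y a^n x and x a^n y ≤ x a^n y · t · x a^n y. -/
variable {S : Type*} [Semigroup S] [PartialOrder S]
  [CovariantClass S S (· * ·) (· ≤ ·)]
  [CovariantClass S S (Function.swap (· * ·)) (· ≤ ·)]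

section LeftLe

variable {M : Type*} [Semigroup M] [Preorder M]

/-- `p ∈ (M q]` in the notation of ordered semigroups. -/
def LeftLe (p q : M) : Prop := ∃ z, p ≤ z * q

theorem LeftLe.trans [MulLeftMono M] {p q r : M} : LeftLe p q → LeftLe q r → LeftLe p r
  | ⟨z, hz⟩, ⟨z', hz'⟩ =>
    ⟨z * z', (hz.trans (mul_le_mul_right hz' z)).trans_eq (mul_assoc z z' r).symm⟩

theorem LeftLe.mul_right [MulRightMono M] {p q : M} (s : M) :
    LeftLe p q → LeftLe (p * s) (q * s)
  | ⟨z, hz⟩ => ⟨z, (mul_le_mul_left hz s).trans_eq (mul_assoc z q s)⟩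

end LeftLe

section IdealOrder

variable {M : Type*} [Semigroup M] [PartialOrder M] {K : Set M}

theorem IsIdeal.mul_mem_left_s12 (hI : IsIdeal K) (s : M) {p : M} (hp : p ∈ K) : s * p ∈ K :=
  hI.2.1 s p hp

theorem IsIdeal.mul_mem_right_s12 (hI : IsIdeal K) {p : M} (hp : p ∈ K) (s : M) : p * s ∈ K :=
  hI.2.2.1 p hp s

theorem LeftCliffordOn.leftLe_mul_right (hC : LeftCliffordOn K) (hI : IsIdeal K) {p : M}
    (hp : p ∈ K) (s : M) : LeftLe (p * s) p := by
  obtain ⟨c, hc, hreg⟩ := hC.1 (p * s) (hI.mul_mem_right_s12 hp s)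
  have hq : s * c * p * s ∈ K :=
    hI.mul_mem_right_s12 (hI.mul_mem_right_s12 (hI.mul_mem_left_s12 s hc) p) s
  obtain ⟨w, -, hw⟩ := hC.2 p hp _ hq
  exact ⟨w, hreg.trans (by simpa only [mul_assoc] using hw)⟩

theorem LeftCliffordOn.leftLe_mul_self [MulRightMono M] (hC : LeftCliffordOn K) (hI : IsIdeal K)
    {p : M} (hp : p ∈ K) : LeftLe p (p * p) := by
  obtain ⟨c, hc, hreg⟩ := hC.1 p hp
  obtain ⟨z, hz⟩ := (hC.leftLe_mul_right hI hp c).mul_right p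
  exact ⟨z, hreg.trans hz⟩

theorem LeftCliffordOn.leftLe_mul_comm [MulLeftMono M] [MulRightMono M] (hC : LeftCliffordOn K)
    (hI : IsIdeal K) {b : M} (hb : b ∈ K) (y : M) : LeftLe (b * y) (y * b) := by
  have hsq : LeftLe (b * y) (b * (y * b * y)) := by
    simpa only [mul_assoc] using hC.leftLe_mul_self hI (hI.mul_mem_right_s12 hb y)
  exact hsq.trans <| LeftLe.trans ⟨b, le_rfl⟩ <|
    hC.leftLe_mul_right hI (hI.mul_mem_left_s12 y hb) y

theorem LeftCliffordOn.leftLe_mul_mul_comm [MulLeftMono M] [MulRightMono M]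
    (hC : LeftCliffordOn K) (hI : IsIdeal K) {b : M} (hb : b ∈ K) (x y : M) :
    LeftLe (x * b * y) (y * b * x) := by
  have hby : b * y ∈ K := hI.mul_mem_right_s12 hb y
  have hsq : LeftLe (x * b * y) (x * (b * y * x * (b * y))) := by
    simpa only [mul_assoc] using
      hC.leftLe_mul_self hI (hI.mul_mem_left_s12 x hby)
  exact hsq.trans <| LeftLe.trans ⟨x, le_rfl⟩ <|
    (hC.leftLe_mul_right hI (hI.mul_mem_right_s12 hby x) _).trans <|
    (hC.leftLe_mul_comm hI hb y).mul_right x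

end IdealOrder

theorem stmt12 (K : Set S) (hI : IsIdeal K) (hC : LeftCliffordOn K)
    (hnil : ∀ a : S, ∃ m : ℕ, spow a m ∈ K) :
    ∀ x a y : S, ∃ n : ℕ, ∃ s t : S,
      x * spow a n * y ≤ x * spow a n * y * s * (y * spow a n * x) ∧
      x * spow a n * y ≤ x * spow a n * y * t * (x * spow a n * y) := by
  intro x a y
  obtain ⟨n, hb⟩ := hnil a
  obtain ⟨c, -, hreg⟩ := hC.1 _ (hI.mul_mem_right_s12 (hI.mul_mem_left_s12 x hb) y)
  obtain ⟨z, hz⟩ := hC.leftLe_mul_mul_comm hI hb x y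
  refine ⟨n, c * z, c, ?_, hreg⟩
  calc x * spow a n * y ≤ x * spow a n * y * c * (x * spow a n * y) := hreg
    _ ≤ x * spow a n * y * c * (z * (y * spow a n * x)) := mul_le_mul_right hz _
    _ = x * spow a n * y * (c * z) * (y * spow a n * x) := by simp only [mul_assoc]
end

section
/- Suppose the ordered semigroup S satisfies: for all x, a, y ∈ S there exists n ∈ ℕ with x a^n y ∈ (x a^n y S y a^n x] ∩ (x a^n y S x a^n y]. Then for all a, b ∈ Reg≤(S) there exists t ∈ Reg≤(S) with ab ≤ t a (i.e., Reg≤(S) is left Clifford). -/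
variable {S : Type*} [Semigroup S] [PartialOrder S]
  [CovariantClass S S (· * ·) (· ≤ ·)]
  [CovariantClass S S (Function.swap (· * ·)) (· ≤ ·)]

/-! Write `a ≤ a x a` and `p = (x a)^(n+1)`, so that `a ≤ a p` and hence `a b ≤ c := a p b`. The
hypothesis at `(a, x a, b)` gives `c ≤ c s (b p a)` and `c ≤ c u c`; the first shows `a b ≤ t a` for
`t := c s b p`, and with the second `t ≤ c u t ≤ t a u t`, so `t` is regular. -/

section

variable {M : Type*} [Semigroup M] [PartialOrder M] [MulRightMono M]

theorem le_mul_spow_of_le_mul_mul {a x : M} (hax : a ≤ a * x * a) :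
    ∀ n, a ≤ a * spow (x * a) n
  | 0 => by rwa [spow, ← mul_assoc]
  | n + 1 =>
    calc a ≤ a * (x * a) := by rwa [← mul_assoc]
      _ ≤ a * spow (x * a) n * (x * a) := mul_le_mul_left (le_mul_spow_of_le_mul_mul hax n) _
      _ = a * spow (x * a) (n + 1) := by rw [spow, mul_assoc]

theorem mul_mem_regLe_of_le {c u w a : M} (hcuc : c ≤ c * u * c) (hcwa : c ≤ c * w * a) :
    c * w ∈ RegLe M :=
  ⟨a * u, calc
    c * w ≤ c * u * c * w := mul_le_mul_left hcuc w
    _ ≤ c * w * a * u * (c * w) := by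
      rw [mul_assoc _ c w]; exact mul_le_mul_left (mul_le_mul_left hcwa u) _
    _ = c * w * (a * u) * (c * w) := by simp only [mul_assoc]⟩

end

theorem stmt15
    (h : ∀ x a y : S, ∃ n : ℕ,
      (∃ s : S, x * spow a n * y ≤ x * spow a n * y * s * (y * spow a n * x)) ∧
      (∃ t : S, x * spow a n * y ≤ x * spow a n * y * t * (x * spow a n * y))) :
    ∀ a ∈ RegLe S, ∀ b ∈ RegLe S, ∃ t ∈ RegLe S, a * b ≤ t * a := by
  rintro a ⟨x, hax⟩ b -
  obtain ⟨n, ⟨s, hs⟩, ⟨u, hu⟩⟩ := h a (x * a) b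
  set c := a * spow (x * a) n * b
  have hct : c ≤ c * (s * (b * spow (x * a) n)) * a := by simpa only [mul_assoc] using hs
  refine ⟨c * (s * (b * spow (x * a) n)), mul_mem_regLe_of_le hu hct, ?_⟩
  calc a * b ≤ c := mul_le_mul_left (le_mul_spow_of_le_mul_mul hax n) b
    _ ≤ _ := hct
end

section
/- Let S be an ordered semigroup and K ⊆ S a left group like ideal (for all u, v ∈ K there exists x ∈ K with u ≤ xv). If S is a nil extension of K and b ∈ Reg≤(S), then b ∈ K. -/
variable {S : Type*} [Semigroup S] [PartialOrder S]
  [CovariantClass S S (· * ·) (· ≤ ·)]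
  [CovariantClass S S (Function.swap (· * ·)) (· ≤ ·)]

theorem le_mul_spow_of_le_mul_mul_s17 {M : Type*} [Semigroup M] [PartialOrder M] [MulRightMono M]
    {b z : M} (h : b ≤ b * z * b) : ∀ n : ℕ, b ≤ b * spow (z * b) n
  | 0 => by simpa only [spow, mul_assoc] using h
  | n + 1 =>
    calc b ≤ b * z * b := h
      _ ≤ b * spow (z * b) n * z * b := by gcongr; exact le_mul_spow_of_le_mul_mul_s17 h n
      _ = b * spow (z * b) (n + 1) := by simp only [spow, mul_assoc]

theorem stmt17_general (K : Set S) (hI : IsIdeal K)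
    (hnil : ∀ a : S, ∃ m : ℕ, spow a m ∈ K) :
    ∀ b ∈ RegLe S, b ∈ K := by
  rintro b ⟨z, hz⟩
  obtain ⟨m, hm⟩ := hnil (z * b)
  obtain ⟨-, hmul_left, -, hdown⟩ := hI
  exact hdown b _ (hmul_left b _ hm) (le_mul_spow_of_le_mul_mul_s17 hz m)

theorem stmt17 (K : Set S) (hI : IsIdeal K) (hL : LeftGroupLike K)
    (hnil : ∀ a : S, ∃ m : ℕ, spow a m ∈ K) :
    ∀ b ∈ RegLe S, b ∈ K :=
  stmt17_general K hI hnil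
end
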